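/- arXiv:1701.04354 — 3 statements merged into one kernel-verified Lean document; each statement's English description precedes it below -/
import Mathlib

section
/- Assume T_{2n+1} ≤ τ, T_{2n} ≥ τ and T_{2n} > T* for all n ∈ ℕ, and set c_n := M² e^{−2μ T_{2n}}. If the partial sums ∑_{n=0}^{N} ln[ e^{B_{2n+1} T_{2n+1}} (c_n + 1 − e^{−B_{2n+1} T_{2n+1}}) ] tend to −∞ as N → ∞, then every trajectory U of the on–off delay system satisfies ‖U(t)‖ → 0 as t → +∞. -/
/-!
On an "off" interval `[t₂ₙ, t₂ₙ₊₁]` the semigroup is a contraction, so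
`‖U‖ ≤ K := ‖U(t₂ₙ)‖` there, and at its right end `‖U(t₂ₙ₊₁)‖² ≤ cₙ K²`. Because
`T₂ₙ₊₁ ≤ τ ≤ T₂ₙ`, on the following "on" interval the delayed state `U(s - τ)` lies in that
"off" interval, so the delay term is bounded by `B K`. Dissipativity then gives
`(‖U‖² + K²)' ≤ 2 B ‖U‖ K ≤ B (‖U‖² + K²)`, and Grönwall's inequality yields `‖U‖² ≤ dₙ K²`
on the "on" interval, with `dₙ = e^{B T}(cₙ + 1 - e^{-B T})`. Hence `‖U(t₂ₙ)‖²` is bounded by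
`∏_{k<n} d_k · ‖U(0)‖²`, and this product tends to zero because its logarithm tends to `-∞`.
-/

open Filter Set Real Topology

theorem le_exp_mul_of_hasDerivAt_le_mul {φ φ' : ℝ → ℝ} {a b β : ℝ}
    (hφ : ContinuousOn φ (Icc a b)) (hderiv : ∀ s ∈ Ioo a b, HasDerivAt φ (φ' s) s)
    (hle : ∀ s ∈ Ioo a b, φ' s ≤ β * φ s) {s : ℝ} (hs : s ∈ Icc a b) :
    φ s ≤ exp (β * (s - a)) * φ a := by
  set w : ℝ → ℝ := fun s => exp (-β * (s - a)) with hw_def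
  have hw : ∀ s, HasDerivAt w (w s * -β) s := fun s =>
    (((hasDerivAt_id s).sub_const a).const_mul (-β)).exp.congr_deriv
      (by simp only [w, id, mul_one])
  have hanti : AntitoneOn (fun s => w s * φ s) (Icc a b) := by
    refine antitoneOn_of_hasDerivWithinAt_nonpos (convex_Icc a b)
      ((by fun_prop : Continuous w).continuousOn.mul hφ)
      (f' := fun s => w s * -β * φ s + w s * φ' s) (fun x hx => ?_) fun x hx => ?_
    · rw [interior_Icc] at hx
      exact ((hw x).mul (hderiv x hx)).hasDerivWithinAt
    · rw [interior_Icc] at hx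
      have hwφ : w x * -β * φ x + w x * φ' x = w x * (φ' x - β * φ x) := by ring
      rw [hwφ]
      exact mul_nonpos_of_nonneg_of_nonpos (exp_pos _).le (by linarith [hle x hx])
  have hws : exp (β * (s - a)) * w s = 1 := by rw [hw_def, ← exp_add]; simp
  calc φ s = exp (β * (s - a)) * (w s * φ s) := by rw [← mul_assoc, hws, one_mul]
    _ ≤ exp (β * (s - a)) * (w a * φ a) :=
      mul_le_mul_of_nonneg_left (hanti ⟨le_rfl, hs.1.trans hs.2⟩ hs hs.1) (exp_pos _).le
    _ = exp (β * (s - a)) * φ a := by simp [w]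

theorem norm_sq_add_sq_le_of_hasDerivAt {H : Type*} [NormedAddCommGroup H]
    [InnerProductSpace ℝ H]
    {U V W : ℝ → H} {a b β K : ℝ} (hβ : 0 ≤ β) (hU : ContinuousOn U (Icc a b))
    (hderiv : ∀ s ∈ Ioo a b, HasDerivAt U (V s + W s) s)
    (hV : ∀ s ∈ Ioo a b, inner ℝ (U s) (V s) ≤ 0) (hW : ∀ s ∈ Ioo a b, ‖W s‖ ≤ β * K)
    {s : ℝ} (hs : s ∈ Icc a b) :
    ‖U s‖ ^ 2 + K ^ 2 ≤ exp (β * (s - a)) * (‖U a‖ ^ 2 + K ^ 2) := by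
  refine le_exp_mul_of_hasDerivAt_le_mul (φ := fun s => ‖U s‖ ^ 2 + K ^ 2)
    (φ' := fun s => 2 * inner ℝ (U s) (V s + W s))
    ((hU.norm.pow 2).add continuousOn_const) (fun s hs => (hderiv s hs).norm_sq.add_const _)
    (fun s hs => ?_) hs
  have hUW : inner ℝ (U s) (W s) ≤ ‖U s‖ * (β * K) :=
    (real_inner_le_norm _ _).trans (mul_le_mul_of_nonneg_left (hW s hs) (norm_nonneg _))
  simp only [inner_add_right]
  -- `2 ‖U‖ (β K) ≤ β (‖U‖² + K²)`
  nlinarith [hV s hs, mul_nonneg hβ (sq_nonneg (‖U s‖ - K))]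

noncomputable def onOffGrowth (β T c : ℝ) : ℝ := exp (β * T) * (c + 1 - exp (-β * T))

theorem onOffGrowth_pos {β T c : ℝ} (hβ : 0 ≤ β) (hT : 0 ≤ T) (hc : 0 < c) :
    0 < onOffGrowth β T c := by
  have : exp (-β * T) ≤ 1 := exp_le_one_iff.2 (by nlinarith)
  exact mul_pos (exp_pos _) (by linarith)

theorem norm_sq_le_onOffGrowth_mul {H : Type*} [NormedAddCommGroup H]
    [InnerProductSpace ℝ H]
    {U V W : ℝ → H} {a b β K T c : ℝ} (hβ : 0 ≤ β) (hU : ContinuousOn U (Icc a b))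
    (hderiv : ∀ s ∈ Ioo a b, HasDerivAt U (V s + W s) s)
    (hV : ∀ s ∈ Ioo a b, inner ℝ (U s) (V s) ≤ 0) (hW : ∀ s ∈ Ioo a b, ‖W s‖ ≤ β * K)
    (hT : b - a ≤ T) (ha : ‖U a‖ ^ 2 ≤ c * K ^ 2) {s : ℝ} (hs : s ∈ Icc a b) :
    ‖U s‖ ^ 2 ≤ onOffGrowth β T c * K ^ 2 := by
  have hgron := norm_sq_add_sq_le_of_hasDerivAt hβ hU hderiv hV hW hs
  have hexp : exp (β * (s - a)) ≤ exp (β * T) :=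
    exp_le_exp.2 (mul_le_mul_of_nonneg_left (by linarith [hs.2]) hβ)
  have hinv : exp (β * T) * exp (-β * T) = 1 := by rw [← exp_add]; simp
  calc ‖U s‖ ^ 2 ≤ exp (β * T) * (c * K ^ 2 + K ^ 2) - K ^ 2 := by
        nlinarith [mul_le_mul hexp (by linarith : ‖U a‖ ^ 2 + K ^ 2 ≤ c * K ^ 2 + K ^ 2)
          (by positivity) (exp_pos _).le]
    _ = onOffGrowth β T c * K ^ 2 := by
        unfold onOffGrowth; linear_combination K ^ 2 * hinv

theorem sq_norm_apply_le_of_opNorm_le_exp {E : Type*} [SeminormedAddCommGroup E]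
    [NormedSpace ℝ E] {A : E →L[ℝ] E} {M μ s : ℝ} (hA : ‖A‖ ≤ M * exp (-μ * s)) (x : E) :
    ‖A x‖ ^ 2 ≤ M ^ 2 * exp (-2 * μ * s) * ‖x‖ ^ 2 :=
  calc ‖A x‖ ^ 2 ≤ (M * exp (-μ * s) * ‖x‖) ^ 2 :=
        pow_le_pow_left₀ (norm_nonneg _) (A.le_of_opNorm_le hA x) 2
    _ = M ^ 2 * exp (-2 * μ * s) * ‖x‖ ^ 2 := by
        rw [mul_pow, mul_pow, ← exp_nat_mul]; push_cast; ring_nf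

theorem le_prod_range_mul_of_le_mul {a d : ℕ → ℝ} (hd : ∀ n, 0 ≤ d n)
    (h : ∀ n, a (n + 1) ≤ d n * a n) (n : ℕ) : a n ≤ (∏ k ∈ Finset.range n, d k) * a 0 := by
  induction n with
  | zero => simp
  | succ n ih =>
    calc a (n + 1) ≤ d n * a n := h n
      _ ≤ d n * ((∏ k ∈ Finset.range n, d k) * a 0) := mul_le_mul_of_nonneg_left ih (hd n)
      _ = (∏ k ∈ Finset.range (n + 1), d k) * a 0 := by rw [Finset.prod_range_succ]; ring

theorem tendsto_prod_range_nhds_zero_of_sum_log {d : ℕ → ℝ} (hd : ∀ n, 0 < d n)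
    (h : Tendsto (fun N => ∑ n ∈ Finset.range N, log (d n)) atTop atBot) :
    Tendsto (fun N => ∏ n ∈ Finset.range N, d n) atTop (𝓝 0) :=
  (tendsto_exp_atBot.comp h).congr fun N => by
    rw [Function.comp_apply, exp_sum]; exact Finset.prod_congr rfl fun n _ => exp_log (hd n)

theorem exists_mem_Ico_of_tendsto_atTop {α : Type*} [LinearOrder α] [NoMaxOrder α]
    {s : ℕ → α} (hlim : Tendsto s atTop atTop) {r : α} (hr : s 0 ≤ r) :
    ∃ n, r ∈ Ico (s n) (s (n + 1)) := by
  classical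
  have hex : ∃ k, r < s k := (hlim.eventually_gt_atTop r).exists
  obtain ⟨n, hn⟩ : ∃ n, Nat.find hex = n + 1 :=
    Nat.exists_eq_succ_of_ne_zero fun h => (h ▸ Nat.find_spec hex).not_ge hr
  exact ⟨n, not_lt.1 (Nat.find_min hex (by omega)), hn ▸ Nat.find_spec hex⟩

theorem tendsto_nhds_zero_of_le_on_Ico {α : Type*} [LinearOrder α] [NoMaxOrder α]
    {s : ℕ → α} (hs : Monotone s) (hlim : Tendsto s atTop atTop) {g : α → ℝ} {b : ℕ → ℝ}
    (hb : Tendsto b atTop (𝓝 0)) (hg : ∀ r, 0 ≤ g r) (hgb : ∀ n, ∀ r ∈ Ico (s n) (s (n + 1)), g r ≤ b n) :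
    Tendsto g atTop (𝓝 0) := by
  refine tendsto_order.2 ⟨fun a ha => .of_forall fun r => ha.trans_le (hg r), fun ε hε => ?_⟩
  obtain ⟨N, hN⟩ := eventually_atTop.1 (hb.eventually (gt_mem_nhds hε))
  filter_upwards [eventually_ge_atTop (s N)] with r hr
  obtain ⟨n, hn⟩ := exists_mem_Ico_of_tendsto_atTop hlim ((hs N.zero_le).trans hr)
  have hNn : N ≤ n := by
    by_contra! h
    exact (hn.2.trans_le (hs h)).not_ge hr
  exact (hgb n r hn).trans_lt (hN n hNn)

theorem tendsto_nhds_zero_of_le_max_one_mul {α : Type*} [LinearOrder α] [NoMaxOrder α]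
    {s : ℕ → α} (hs : Monotone s) (hlim : Tendsto s atTop atTop) {g : α → ℝ}
    (hg : ∀ r, 0 ≤ g r) {a d : ℕ → ℝ} (hd : ∀ n, 0 ≤ d n)
    (hprod : Tendsto (fun N => ∏ n ∈ Finset.range N, d n) atTop (𝓝 0))
    (hstep : ∀ n, a (n + 1) ≤ d n * a n)
    (hgb : ∀ n, ∀ r ∈ Ico (s n) (s (n + 1)), g r ≤ max 1 (d n) * a n) :
    Tendsto g atTop (𝓝 0) := by
  set P : ℕ → ℝ := fun N => ∏ n ∈ Finset.range N, d n
  have hP_nonneg : ∀ n, 0 ≤ P n := fun n => Finset.prod_nonneg fun k _ => hd k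
  refine tendsto_nhds_zero_of_le_on_Ico hs hlim (b := fun n => max (P n) (P (n + 1)) * a 0)
    (by simpa using (hprod.max (hprod.comp (tendsto_add_atTop_nat 1))).mul_const (a 0)) hg
    fun n r hr => (hgb n r hr).trans ?_
  calc max 1 (d n) * a n ≤ max 1 (d n) * (P n * a 0) :=
        mul_le_mul_of_nonneg_left (le_prod_range_mul_of_le_mul hd hstep n) (by positivity)
    _ = max (P n) (P (n + 1)) * a 0 := by
        rw [← mul_assoc, max_mul_of_nonneg _ _ (hP_nonneg n), one_mul, mul_comm (d n),
          ← Finset.prod_range_succ]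

theorem stmt_6_general
    {H : Type*} [NormedAddCommGroup H] [InnerProductSpace ℝ H]
    (S : ℝ → H →L[ℝ] H) (M μ : ℝ)
    (hM : 1 ≤ M)
    (hSbound : ∀ s : ℝ, 0 ≤ s → ‖S s‖ ≤ M * Real.exp (-μ * s))
    (hScontr : ∀ s : ℝ, 0 ≤ s → ∀ x : H, ‖S s x‖ ≤ ‖x‖)
    (t : ℕ → ℝ) (ht0 : t 0 = 0) (htmono : StrictMono t)
    (htlim : Filter.Tendsto t Filter.atTop Filter.atTop)
    (τ : ℝ)
    (B : ℕ → H →L[ℝ] H)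
    (hT2n1τ : ∀ n : ℕ, t (2*n+2) - t (2*n+1) ≤ τ)
    (hT2nτ : ∀ n : ℕ, τ ≤ t (2*n+1) - t (2*n))
    (hdiv : Filter.Tendsto
      (fun N => ∑ n ∈ Finset.range (N+1),
        Real.log (Real.exp (‖B n‖*(t (2*n+2) - t (2*n+1))) *
          (M^2 * Real.exp (-2*μ*(t (2*n+1) - t (2*n))) + 1 -
            Real.exp (-‖B n‖*(t (2*n+2) - t (2*n+1))))))
      Filter.atTop Filter.atBot)
    (U : ℝ → H) (V : ℝ → H)
    (hUcont : ContinuousOn U (Set.Ici (0:ℝ)))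
    (hUeven : ∀ n : ℕ, ∀ s ∈ Set.Icc (t (2*n)) (t (2*n+1)),
      U s = S (s - t (2*n)) (U (t (2*n))))
    (hUodd : ∀ n : ℕ, ∀ s ∈ Set.Ioo (t (2*n+1)) (t (2*n+2)),
      HasDerivAt U (V s + B n (U (s - τ))) s)
    (hdiss : ∀ n : ℕ, ∀ s ∈ Set.Ioo (t (2*n+1)) (t (2*n+2)),
      (inner ℝ (U s) (V s) : ℝ) ≤ 0)
    :
    Filter.Tendsto (fun r => ‖U r‖) Filter.atTop (nhds 0) := by
  have ht_nonneg : ∀ n, 0 ≤ t n := fun n => ht0 ▸ htmono.monotone n.zero_le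
  have ht_pos : ∀ n, 0 < t (n + 1) - t n := fun n => sub_pos.2 (htmono n.lt_succ_self)
  set c : ℕ → ℝ := fun n => M^2 * exp (-2*μ*(t (2*n+1) - t (2*n)))
  set d : ℕ → ℝ := fun n => onOffGrowth ‖B n‖ (t (2*n+2) - t (2*n+1)) (c n)
  have hd_pos : ∀ n, 0 < d n := fun n =>
    onOffGrowth_pos (norm_nonneg _) (ht_pos _).le (by positivity)
  have hoff : ∀ n, ∀ s ∈ Icc (t (2*n)) (t (2*n+1)), ‖U s‖ ≤ ‖U (t (2*n))‖ := fun n s hs =>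
    (hUeven n s hs).symm ▸ hScontr _ (sub_nonneg.2 hs.1) _
  have hswitch : ∀ n, ‖U (t (2*n+1))‖ ^ 2 ≤ c n * ‖U (t (2*n))‖ ^ 2 :=
    fun n => hUeven n _ ⟨(htmono (by omega)).le, le_rfl⟩ ▸
      sq_norm_apply_le_of_opNorm_le_exp (hSbound _ (ht_pos _).le) _
  have hdelay : ∀ n, ∀ s ∈ Ioo (t (2*n+1)) (t (2*n+2)),
      ‖B n (U (s - τ))‖ ≤ ‖B n‖ * ‖U (t (2*n))‖ :=
    fun n s hs => (B n).le_opNorm_of_le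
      (hoff n _ ⟨by linarith [hs.1, hT2nτ n], by linarith [hs.2, hT2n1τ n]⟩)
  have hon : ∀ n, ∀ s ∈ Icc (t (2*n+1)) (t (2*n+2)),
      ‖U s‖ ^ 2 ≤ d n * ‖U (t (2*n))‖ ^ 2 :=
    fun n _ hs => norm_sq_le_onOffGrowth_mul (norm_nonneg (B n))
      (hUcont.mono fun r hr => (ht_nonneg _).trans hr.1) (hUodd n) (hdiss n) (hdelay n) le_rfl
      (hswitch n) hs
  have hsq : Tendsto (fun r => ‖U r‖ ^ 2) atTop (𝓝 0) := by
    refine tendsto_nhds_zero_of_le_max_one_mul (s := fun n => t (2*n))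
      (a := fun n => ‖U (t (2*n))‖ ^ 2) (fun m n h => htmono.monotone (by omega))
      (htlim.comp (StrictMono.tendsto_atTop fun m n h => by omega)) (fun r => sq_nonneg _)
      (fun n => (hd_pos n).le)
      (tendsto_prod_range_nhds_zero_of_sum_log hd_pos ((tendsto_add_atTop_iff_nat 1).1 hdiv))
      (fun n => hon n _ ⟨(htmono (by omega)).le, le_rfl⟩) fun n r hr => ?_
    rcases le_or_gt r (t (2*n+1)) with hr_off | hr_on
    · exact (pow_le_pow_left₀ (norm_nonneg _) (hoff n r ⟨hr.1, hr_off⟩) 2).trans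
        (le_mul_of_one_le_left (sq_nonneg _) (le_max_left _ _))
    · exact (hon n r ⟨hr_on.le, hr.2.le⟩).trans
        (mul_le_mul_of_nonneg_right (le_max_right _ _) (sq_nonneg _))
  simpa [sqrt_sq_eq_abs] using hsq.sqrt

theorem stmt_6
    {H : Type*} [NormedAddCommGroup H] [InnerProductSpace ℝ H]
    (S : ℝ → H →L[ℝ] H) (M μ : ℝ)
    (hM : 1 ≤ M) (hμ : 0 < μ)
    (hS0 : S 0 = ContinuousLinearMap.id ℝ H)
    (hSadd : ∀ s u : ℝ, 0 ≤ s → 0 ≤ u → S (s + u) = (S s).comp (S u))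
    (hScont : ∀ x : H, ContinuousOn (fun s => S s x) (Set.Ici (0:ℝ)))
    (hSbound : ∀ s : ℝ, 0 ≤ s → ‖S s‖ ≤ M * Real.exp (-μ * s))
    (hScontr : ∀ s : ℝ, 0 ≤ s → ∀ x : H, ‖S s x‖ ≤ ‖x‖)
    (t : ℕ → ℝ) (ht0 : t 0 = 0) (htmono : StrictMono t)
    (htlim : Filter.Tendsto t Filter.atTop Filter.atTop)
    (τ : ℝ) (hτ : 0 < τ)
    (B : ℕ → H →L[ℝ] H)
    (hT2n1τ : ∀ n : ℕ, t (2*n+2) - t (2*n+1) ≤ τ)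
    (hT2nτ : ∀ n : ℕ, τ ≤ t (2*n+1) - t (2*n))
    (hT2nstar : ∀ n : ℕ, Real.log M / μ < t (2*n+1) - t (2*n))
    (hdiv : Filter.Tendsto
      (fun N => ∑ n ∈ Finset.range (N+1),
        Real.log (Real.exp (‖B n‖*(t (2*n+2) - t (2*n+1))) *
          (M^2 * Real.exp (-2*μ*(t (2*n+1) - t (2*n))) + 1 -
            Real.exp (-‖B n‖*(t (2*n+2) - t (2*n+1))))))
      Filter.atTop Filter.atBot)
    (U : ℝ → H) (U₀ : H) (V : ℝ → H)
    (hUcont : ContinuousOn U (Set.Ici (0:ℝ))) (hU0 : U 0 = U₀)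
    (hUeven : ∀ n : ℕ, ∀ s ∈ Set.Icc (t (2*n)) (t (2*n+1)),
      U s = S (s - t (2*n)) (U (t (2*n))))
    (hUodd : ∀ n : ℕ, ∀ s ∈ Set.Ioo (t (2*n+1)) (t (2*n+2)),
      HasDerivAt U (V s + B n (U (s - τ))) s)
    (hdiss : ∀ n : ℕ, ∀ s ∈ Set.Ioo (t (2*n+1)) (t (2*n+2)),
      (inner ℝ (U s) (V s) : ℝ) ≤ 0)
    :
    Filter.Tendsto (fun r => ‖U r‖) Filter.atTop (nhds 0) :=
  stmt_6_general S M μ hM hSbound hScontr t ht0 htmono htlim τ B hT2n1τ hT2nτ hdiv U V hUcont hUeven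
    hUodd hdiss
end

section
/- Assume T_{2n} = T⁰ for all n, with T⁰ ≥ τ and T⁰ > T*, and T_{2n+1} = T̃ for all n with T̃ ≤ τ. Set c := M e^{−μ T⁰}, and suppose there is d < 1 such that e^{B_{2n+1} T̃} (c + 1 − e^{−B_{2n+1} T̃}) ≤ d for every n ∈ ℕ. Then there exist constants C > 0 and α > 0, depending only on M, μ, τ, T⁰, T̃ and d, such that every trajectory U of the on–off delay system with initial datum U₀ satisfies ‖U(t)‖ ≤ C e^{−α t} ‖U₀‖ for all t ≥ 0. -/
/-!
While the feedback is off, the contraction semigroup does not increase the norm, and over the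
whole interval of length `T0` it multiplies it by at most `c = M e^{-μ T0}`. Because
`T̃ ≤ τ ≤ T0`, the delayed state fed back during the next interval lies in the preceding
feedback-free one, so its norm is at most the norm `N` at the start of the period. Dissipativity
then lets the norm grow at most linearly at rate `‖B‖ N`, so over a period the norm is multiplied
by at most `c + ‖B‖ T̃ ≤ e^{‖B‖ T̃} (c + 1 - e^{-‖B‖ T̃}) ≤ d` (using `e^x ≥ 1 + x`).
Geometric decay over periods of length `T0 + T̃` is exponential decay.
-/

open Set Real
open scoped InnerProductSpace

section OnOffDelay

variable {H : Type*} [NormedAddCommGroup H] [InnerProductSpace ℝ H]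

theorem norm_le_add_mul_of_inner_deriv_le {U F : ℝ → H} {a b A : ℝ} (hA : 0 ≤ A)
    (hcont : ContinuousOn U (Icc a b)) (hderiv : ∀ s ∈ Ioo a b, HasDerivAt U (F s) s)
    (hbound : ∀ s ∈ Ioo a b, ⟪U s, F s⟫_ℝ ≤ A * ‖U s‖) :
    ∀ s ∈ Icc a b, ‖U s‖ ≤ ‖U a‖ + A * (s - a) := by
  intro s hs
  refine le_of_forall_pos_le_add fun ε hε => ?_
  -- `‖U‖` need not be differentiable where `U` vanishes, so work with a smoothed norm.
  set g : ℝ → ℝ := fun y => √(‖U y‖ ^ 2 + ε ^ 2)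
  have hg_pos : ∀ y, 0 < ‖U y‖ ^ 2 + ε ^ 2 := fun y => by positivity
  have hnorm_le_g : ∀ y, ‖U y‖ ≤ g y := fun y => le_sqrt_of_sq_le (by nlinarith)
  have hg_deriv : ∀ y ∈ Ioo a b, HasDerivAt g (2 * ⟪U y, F y⟫_ℝ / (2 * g y)) y :=
    fun y hy => ((hderiv y hy).norm_sq.add_const _).sqrt (hg_pos y).ne'
  have hg_deriv_le : ∀ y ∈ interior (Icc a b), deriv g y ≤ A := by
    rw [interior_Icc]
    intro y hy
    have hgy : 0 < g y := sqrt_pos.2 (hg_pos y)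
    rw [(hg_deriv y hy).deriv, div_le_iff₀ (by positivity)]
    nlinarith [hbound y hy, hnorm_le_g y]
  have hg_cont : ContinuousOn g (Icc a b) :=
    continuous_sqrt.comp_continuousOn ((hcont.norm.pow 2).add continuousOn_const)
  have hg_diff : DifferentiableOn ℝ g (interior (Icc a b)) := by
    rw [interior_Icc]
    exact fun y hy => (hg_deriv y hy).differentiableAt.differentiableWithinAt
  have hmvt := (convex_Icc a b).image_sub_le_mul_sub_of_deriv_le hg_cont hg_diff hg_deriv_le
    a (left_mem_Icc.2 (hs.1.trans hs.2)) s hs hs.1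
  have hga : g a ≤ ‖U a‖ + ε := (sqrt_le_left (by positivity)).2 (by nlinarith [norm_nonneg (U a)])
  linarith [hnorm_le_g s]

variable {S : ℝ → H →L[ℝ] H} {B : H →L[ℝ] H} {U V : ℝ → H} {a b c τ : ℝ}

theorem norm_le_of_semigroup_contraction (hScontr : ∀ s, 0 ≤ s → ∀ x, ‖S s x‖ ≤ ‖x‖)
    (hsemigroup : ∀ s ∈ Icc a b, U s = S (s - a) (U a)) {s : ℝ} (hs : s ∈ Icc a b) :
    ‖U s‖ ≤ ‖U a‖ :=
  hsemigroup s hs ▸ hScontr _ (sub_nonneg.2 hs.1) _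

theorem norm_le_of_delayed_feedback (hScontr : ∀ s, 0 ≤ s → ∀ x, ‖S s x‖ ≤ ‖x‖)
    (hτa : τ ≤ b - a) (hτc : c - b ≤ τ)
    (hsemigroup : ∀ s ∈ Icc a b, U s = S (s - a) (U a))
    (hcont : ContinuousOn U (Icc b c))
    (hderiv : ∀ s ∈ Ioo b c, HasDerivAt U (V s + B (U (s - τ))) s)
    (hdiss : ∀ s ∈ Ioo b c, ⟪U s, V s⟫_ℝ ≤ 0) {s : ℝ} (hs : s ∈ Icc b c) :
    ‖U s‖ ≤ (‖S (b - a)‖ + ‖B‖ * (c - b)) * ‖U a‖ := by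
  have hab : a ≤ b := by linarith [hs.1.trans hs.2]
  have hinner : ∀ x ∈ Ioo b c, ⟪U x, V x + B (U (x - τ))⟫_ℝ ≤ ‖B‖ * ‖U a‖ * ‖U x‖ := by
    intro x hx
    have hdelay : ‖U (x - τ)‖ ≤ ‖U a‖ :=
      norm_le_of_semigroup_contraction hScontr hsemigroup ⟨by linarith [hx.1], by linarith [hx.2]⟩
    calc ⟪U x, V x + B (U (x - τ))⟫_ℝ = ⟪U x, V x⟫_ℝ + ⟪U x, B (U (x - τ))⟫_ℝ :=
          inner_add_right _ _ _
      _ ≤ 0 + ‖U x‖ * ‖B (U (x - τ))‖ := add_le_add (hdiss x hx) (real_inner_le_norm _ _)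
      _ ≤ ‖U x‖ * (‖B‖ * ‖U a‖) := by
          rw [zero_add]
          gcongr
          exact (B.le_opNorm _).trans (by gcongr)
      _ = ‖B‖ * ‖U a‖ * ‖U x‖ := by ring
  have hgrowth := norm_le_add_mul_of_inner_deriv_le (by positivity) hcont hderiv hinner s hs
  have hUb : ‖U b‖ ≤ ‖S (b - a)‖ * ‖U a‖ := hsemigroup b ⟨hab, le_rfl⟩ ▸ (S (b - a)).le_opNorm _
  nlinarith [mul_nonneg (mul_nonneg (norm_nonneg B) (norm_nonneg (U a))) (sub_nonneg.2 hs.2)]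

end OnOffDelay

theorem add_le_exp_mul_add_one_sub_exp_neg {c x : ℝ} (hc : 0 ≤ c) (hx : 0 ≤ x) :
    c + x ≤ exp x * (c + 1 - exp (-x)) := by
  have hexp : exp x * exp (-x) = 1 := by rw [← exp_add, add_neg_cancel, exp_zero]
  nlinarith [add_one_le_exp x, mul_nonneg hc (sub_nonneg.2 (one_le_exp hx))]

theorem pow_le_inv_mul_exp {d L r : ℝ} {n : ℕ} (hd0 : 0 < d) (hd1 : d ≤ 1) (hL : 0 < L)
    (hr : r < (n + 1) * L) : d ^ n ≤ d⁻¹ * exp (log d / L * r) := by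
  have hpow : d ^ (n + 1) = exp ((n + 1 : ℕ) * log d) := by rw [exp_nat_mul, exp_log hd0]
  have hexponent : ((n + 1 : ℕ) : ℝ) * log d ≤ log d / L * r := by
    rw [div_mul_eq_mul_div, le_div_iff₀ hL, mul_comm (log d)]
    push_cast
    nlinarith [log_nonpos hd0.le hd1]
  calc d ^ n = d⁻¹ * d ^ (n + 1) := by field_simp; ring
    _ ≤ d⁻¹ * exp (log d / L * r) := by
        rw [hpow]
        gcongr

theorem le_inv_mul_exp_of_le_pow {f : ℝ → ℝ} {L d K r : ℝ} (hL : 0 < L) (hd0 : 0 < d)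
    (hd1 : d ≤ 1) (hK : 0 ≤ K)
    (hf : ∀ n : ℕ, ∀ s ∈ Icc (n * L) ((n + 1) * L), f s ≤ d ^ n * K) (hr : 0 ≤ r) :
    f r ≤ d⁻¹ * exp (log d / L * r) * K := by
  have hfloor : ⌊r / L⌋₊ * L ≤ r := (le_div_iff₀ hL).1 (Nat.floor_le (div_nonneg hr hL.le))
  have hceil : r < (⌊r / L⌋₊ + 1) * L := (div_lt_iff₀ hL).1 (Nat.lt_floor_add_one _)
  exact (hf _ r ⟨hfloor, hceil.le⟩).trans
    (mul_le_mul_of_nonneg_right (pow_le_inv_mul_exp hd0 hd1 hL hceil) hK)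

theorem two_mul_eq_of_alternating_gaps {t : ℕ → ℝ} {T T' : ℝ} (ht0 : t 0 = 0)
    (hT : ∀ n : ℕ, t (2 * n + 1) - t (2 * n) = T)
    (hT' : ∀ n : ℕ, t (2 * n + 2) - t (2 * n + 1) = T') (n : ℕ) :
    t (2 * n) = n * (T + T') := by
  induction n with
  | zero => simp [ht0]
  | succ k ih =>
    rw [show 2 * (k + 1) = 2 * k + 2 by ring]
    push_cast
    linarith [hT k, hT' k]

theorem stmt_8_general
    {H : Type*} [NormedAddCommGroup H] [InnerProductSpace ℝ H]
    (S : ℝ → H →L[ℝ] H) (M μ : ℝ)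
    (hM : 1 ≤ M)
    (hSbound : ∀ s : ℝ, 0 ≤ s → ‖S s‖ ≤ M * Real.exp (-μ * s))
    (hScontr : ∀ s : ℝ, 0 ≤ s → ∀ x : H, ‖S s x‖ ≤ ‖x‖)
    (t : ℕ → ℝ) (ht0 : t 0 = 0) (htmono : StrictMono t)
    (τ : ℝ)
    (B : ℕ → H →L[ℝ] H)
    (T0 Ttil : ℝ)
    (hT0 : ∀ n : ℕ, t (2*n+1) - t (2*n) = T0)
    (hT0τ : τ ≤ T0)
    (hTt : ∀ n : ℕ, t (2*n+2) - t (2*n+1) = Ttil) (hTtτ : Ttil ≤ τ)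
    (d : ℝ) (hd : d < 1)
    (hsup : ∀ n : ℕ,
      Real.exp (‖B n‖*Ttil) * (M * Real.exp (-μ*T0) + 1 - Real.exp (-‖B n‖*Ttil)) ≤ d)
    :
    ∃ C > (0:ℝ), ∃ α > (0:ℝ), ∀ (U : ℝ → H) (U₀ : H) (V : ℝ → H),
      ContinuousOn U (Set.Ici (0:ℝ)) → U 0 = U₀ →
      (∀ n : ℕ, ∀ s ∈ Set.Icc (t (2*n)) (t (2*n+1)),
        U s = S (s - t (2*n)) (U (t (2*n)))) →
      (∀ n : ℕ, ∀ s ∈ Set.Ioo (t (2*n+1)) (t (2*n+2)),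
        HasDerivAt U (V s + B n (U (s - τ))) s) →
      (∀ n : ℕ, ∀ s ∈ Set.Ioo (t (2*n+1)) (t (2*n+2)),
        (inner ℝ (U s) (V s) : ℝ) ≤ 0) →
      ∀ r : ℝ, 0 ≤ r → ‖U r‖ ≤ C * Real.exp (-α * r) * ‖U₀‖ := by
  have hT0pos : 0 < T0 := by linarith [hT0 0, htmono (show 2 * 0 < 2 * 0 + 1 by omega)]
  have hTtpos : 0 < Ttil := by linarith [hTt 0, htmono (show 2 * 0 + 1 < 2 * 0 + 2 by omega)]
  have hdecay : ∀ n, M * exp (-μ * T0) + ‖B n‖ * Ttil ≤ d := fun n =>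
    (add_le_exp_mul_add_one_sub_exp_neg (by positivity) (by positivity)).trans
      (by simpa only [neg_mul] using hsup n)
  have hd0 : 0 < d := by nlinarith [hdecay 0, exp_pos (-μ * T0), norm_nonneg (B 0)]
  have htnonneg : ∀ k, 0 ≤ t k := fun k => ht0 ▸ htmono.monotone (Nat.zero_le k)
  have htperiod := two_mul_eq_of_alternating_gaps ht0 hT0 hTt
  refine ⟨d⁻¹, inv_pos.2 hd0, -log d / (T0 + Ttil),
    div_pos (neg_pos.2 (log_neg hd0 hd)) (by positivity), ?_⟩
  intro U U₀ V hUcont hU0 hsemigroup hderiv hdiss r hr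
  have hfeedback : ∀ n, ∀ s ∈ Icc (t (2 * n + 1)) (t (2 * n + 2)), ‖U s‖ ≤ d * ‖U (t (2 * n))‖ :=
    fun n s hs => (norm_le_of_delayed_feedback hScontr (by linarith [hT0 n]) (by linarith [hTt n])
      (hsemigroup n) (hUcont.mono fun x hx => (htnonneg _).trans hx.1) (hderiv n) (hdiss n)
      hs).trans (mul_le_mul_of_nonneg_right
        (by rw [hT0 n, hTt n]; linarith [hSbound T0 hT0pos.le, hdecay n]) (norm_nonneg _))
  have hgeom : ∀ n : ℕ, ‖U (t (2 * n))‖ ≤ d ^ n * ‖U₀‖ := fun n => by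
    simpa [ht0, hU0] using le_geom (u := fun n => ‖U (t (2 * n))‖) hd0.le n
      fun k _ => hfeedback k _ (right_mem_Icc.2 (htmono (by omega)).le)
  have hperiod : ∀ n : ℕ, ∀ s ∈ Icc (n * (T0 + Ttil)) ((n + 1) * (T0 + Ttil)),
      ‖U s‖ ≤ d ^ n * ‖U₀‖ := by
    intro n s hs
    have hend := htperiod (n + 1)
    push_cast at hend
    rw [← htperiod, ← hend] at hs
    refine le_trans ?_ (hgeom n)
    rcases le_total s (t (2 * n + 1)) with hs₁ | hs₁
    · exact norm_le_of_semigroup_contraction hScontr (hsemigroup n) ⟨hs.1, hs₁⟩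
    · exact (hfeedback n s ⟨hs₁, hs.2⟩).trans (mul_le_of_le_one_left (norm_nonneg _) hd.le)
  rw [neg_div, neg_neg]
  exact le_inv_mul_exp_of_le_pow (f := fun s => ‖U s‖) (by positivity) hd0 hd.le (norm_nonneg _)
    hperiod hr

theorem stmt_8
    {H : Type*} [NormedAddCommGroup H] [InnerProductSpace ℝ H]
    (S : ℝ → H →L[ℝ] H) (M μ : ℝ)
    (hM : 1 ≤ M) (hμ : 0 < μ)
    (hS0 : S 0 = ContinuousLinearMap.id ℝ H)
    (hSadd : ∀ s u : ℝ, 0 ≤ s → 0 ≤ u → S (s + u) = (S s).comp (S u))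
    (hScont : ∀ x : H, ContinuousOn (fun s => S s x) (Set.Ici (0:ℝ)))
    (hSbound : ∀ s : ℝ, 0 ≤ s → ‖S s‖ ≤ M * Real.exp (-μ * s))
    (hScontr : ∀ s : ℝ, 0 ≤ s → ∀ x : H, ‖S s x‖ ≤ ‖x‖)
    (t : ℕ → ℝ) (ht0 : t 0 = 0) (htmono : StrictMono t)
    (htlim : Filter.Tendsto t Filter.atTop Filter.atTop)
    (τ : ℝ) (hτ : 0 < τ)
    (B : ℕ → H →L[ℝ] H)
    (T0 Ttil : ℝ)
    (hT0 : ∀ n : ℕ, t (2*n+1) - t (2*n) = T0)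
    (hT0τ : τ ≤ T0) (hT0star : Real.log M / μ < T0)
    (hTt : ∀ n : ℕ, t (2*n+2) - t (2*n+1) = Ttil) (hTtτ : Ttil ≤ τ)
    (d : ℝ) (hd : d < 1)
    (hsup : ∀ n : ℕ,
      Real.exp (‖B n‖*Ttil) * (M * Real.exp (-μ*T0) + 1 - Real.exp (-‖B n‖*Ttil)) ≤ d)
    :
    ∃ C > (0:ℝ), ∃ α > (0:ℝ), ∀ (U : ℝ → H) (U₀ : H) (V : ℝ → H),
      ContinuousOn U (Set.Ici (0:ℝ)) → U 0 = U₀ →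
      (∀ n : ℕ, ∀ s ∈ Set.Icc (t (2*n)) (t (2*n+1)),
        U s = S (s - t (2*n)) (U (t (2*n)))) →
      (∀ n : ℕ, ∀ s ∈ Set.Ioo (t (2*n+1)) (t (2*n+2)),
        HasDerivAt U (V s + B n (U (s - τ))) s) →
      (∀ n : ℕ, ∀ s ∈ Set.Ioo (t (2*n+1)) (t (2*n+2)),
        (inner ℝ (U s) (V s) : ℝ) ≤ 0) →
      ∀ r : ℝ, 0 ≤ r → ‖U r‖ ≤ C * Real.exp (-α * r) * ‖U₀‖ :=
  stmt_8_general S M μ hM hSbound hScontr t ht0 htmono τ B T0 Ttil hT0 hT0τ hTt hTtτ d hd hsup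
end

section
/- Let (a_n)_{n∈ℕ} be a sequence of nonnegative real numbers with ∑_{n=0}^∞ a_n < +∞, and let (c_n)_{n∈ℕ} be a sequence in (0,1). Then the partial sums ∑_{n=0}^{N} ln c_n tend to −∞ as N → ∞ if and only if the partial sums ∑_{n=0}^{N} ln(c_n + a_n) tend to −∞ as N → ∞. -/
/-!
On a series whose terms are bounded above by a summable sequence, divergence to `-∞` is the same
as non-summability. Both `log cₙ` and `log (cₙ + aₙ)` are bounded above by `aₙ`, so the claim
becomes `Summable (log c) ↔ Summable (log (c + a))`. Either summability forces `cₙ → 1`, and once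
`cₙ ≥ 1/2` the difference `log (cₙ + aₙ) - log cₙ = log (1 + aₙ / cₙ)` lies in `[0, 2 aₙ]`,
so the two series differ by a summable one.
-/

open Filter Finset Real Topology

theorem tendsto_sum_range_atBot_iff_not_summable {y b : ℕ → ℝ} (hb : Summable b)
    (hyb : ∀ n, y n ≤ b n) :
    Tendsto (fun N => ∑ n ∈ range N, y n) atTop atBot ↔ ¬Summable y := by
  refine ⟨fun hy hsum => not_tendsto_atBot_of_tendsto_nhds hsum.hasSum.tendsto_sum_nat hy,
    fun hy => ?_⟩
  have hgap : Tendsto (fun N => ∑ n ∈ range N, (b n - y n)) atTop atTop := by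
    by_contra hgap
    have hsub := (summable_iff_not_tendsto_nat_atTop_of_nonneg
      fun n => sub_nonneg.2 (hyb n)).2 hgap
    exact hy (by simpa using hb.sub hsub)
  refine (hb.hasSum.tendsto_sum_nat.add_atBot (tendsto_neg_atTop_atBot.comp hgap)).congr
    fun N => ?_
  simp [sum_sub_distrib]

theorem log_add_sub_log_le {c a : ℝ} (hc : 1 / 2 ≤ c) (ha : 0 ≤ a) :
    log (c + a) - log c ≤ 2 * a := by
  have hc0 : 0 < c := by linarith
  rw [← log_div (by linarith) hc0.ne']
  calc log ((c + a) / c) ≤ (c + a) / c - 1 := log_le_sub_one_of_pos (by positivity)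
    _ = a / c := by field_simp; ring
    _ ≤ 2 * a := by rw [div_le_iff₀ hc0]; nlinarith

theorem summable_log_iff_summable_log_add {ι : Type*} {c a : ι → ℝ} (hc : ∀ i, 0 < c i)
    (ha : ∀ i, 0 ≤ a i) (hsum : Summable a) (hc1 : Tendsto c cofinite (𝓝 1)) :
    Summable (fun i => log (c i)) ↔ Summable (fun i => log (c i + a i)) := by
  refine (summable_iff_of_summable_sub ?_).symm
  refine (hsum.mul_left 2).of_norm_bounded_eventually ?_
  filter_upwards [hc1.eventually_const_le (by norm_num : (1 / 2 : ℝ) < 1)] with i hci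
  have hmono : log (c i) ≤ log (c i + a i) := log_le_log (hc i) (by linarith [ha i])
  rw [Real.norm_of_nonneg (sub_nonneg.2 hmono)]
  exact log_add_sub_log_le hci (ha i)

theorem tendsto_one_of_summable_log {ι : Type*} {x : ι → ℝ} (hx : ∀ i, 0 < x i)
    (h : Summable fun i => log (x i)) : Tendsto x cofinite (𝓝 1) := by
  have := (continuous_exp.tendsto 0).comp h.tendsto_cofinite_zero
  simpa [Function.comp_def, exp_log (hx _)] using this

theorem stmt_19
    (a : ℕ → ℝ) (ha : ∀ n, 0 ≤ a n) (hsum : Summable a)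
    (c : ℕ → ℝ) (hc : ∀ n, c n ∈ Set.Ioo (0:ℝ) 1)
    :
    Filter.Tendsto (fun N => ∑ n ∈ Finset.range (N+1), Real.log (c n))
        Filter.atTop Filter.atBot ↔
      Filter.Tendsto (fun N => ∑ n ∈ Finset.range (N+1), Real.log (c n + a n))
        Filter.atTop Filter.atBot := by
  have hc0 : ∀ n, 0 < c n := fun n => (hc n).1
  have hca0 : ∀ n, 0 < c n + a n := fun n => by linarith [ha n, hc0 n]
  have hlog_le : ∀ n, log (c n) ≤ a n := fun n => by
    linarith [log_le_sub_one_of_pos (hc0 n), (hc n).2, ha n]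
  have hlog_add_le : ∀ n, log (c n + a n) ≤ a n := fun n => by
    linarith [log_le_sub_one_of_pos (hca0 n), (hc n).2]
  rw [tendsto_add_atTop_iff_nat (f := fun N => ∑ n ∈ range N, log (c n)) 1,
    tendsto_add_atTop_iff_nat (f := fun N => ∑ n ∈ range N, log (c n + a n)) 1,
    tendsto_sum_range_atBot_iff_not_summable hsum hlog_le,
    tendsto_sum_range_atBot_iff_not_summable hsum hlog_add_le, not_iff_not]
  constructor
  · intro h
    exact (summable_log_iff_summable_log_add hc0 ha hsum (tendsto_one_of_summable_log hc0 h)).1 h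
  · intro h
    have hc1 : Tendsto c cofinite (𝓝 1) := by
      simpa using (tendsto_one_of_summable_log hca0 h).sub hsum.tendsto_cofinite_zero
    exact (summable_log_iff_summable_log_add hc0 ha hsum hc1).2 h
end
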